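/- arXiv:2203.10428 — 2 statements merged into one kernel-verified Lean document; each statement's English description precedes it below -/
import Mathlib

section
/- Let L ≥ 2, let τ : ℝ → ℝ satisfy |τ(x)| ≤ C_σ and |τ(x) − τ(y)| ≤ L_σ |x − y| for all x, y, let P_in, P_bd ∈ ℝ^{n×n} with ‖P_in‖_F + ‖P_bd‖_F ≤ B_P, and for t ∈ ℕ, ℓ ∈ {1,…,L} let W^(t,ℓ) with ‖W^(t,ℓ)‖_F ≤ B_W and ‖W^(t,ℓ) − W^(t-1,ℓ)‖_F ≤ B_{ΔW} for t ≥ 1, and matrices Z̃^(t,ℓ) with ‖Z̃^(t,ℓ) − Z̃^(t-1,ℓ)‖_F ≤ B_{ΔZ} for all t ≥ 1. Suppose the family J̃^(t,ℓ) satisfies: J̃^(t,ℓ-1) = P_inᵀ (J̃^(t,ℓ) ∘ τ(Z̃^(t,ℓ))) (W^(t,ℓ))ᵀ + P_bdᵀ (J̃^(t-1,ℓ) ∘ τ(Z̃^(t-1,ℓ))) (W^(t-1,ℓ))ᵀ for all t ≥ 1 and ℓ ∈ {2,…,L}; ‖J̃^(t,ℓ)‖_F ≤ B_J and ‖J̃^(t,ℓ)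 ∘ τ(Z̃^(t,ℓ))‖_F ≤ B_M for all t, ℓ; ‖J̃^(t,L) − J̃^(t-1,L)‖_F ≤ L_loss B_{ΔH} for all t ≥ 1; and the base case ‖J̃^(1,ℓ) − J̃^(0,ℓ)‖_F ≤ (B_P B_W C_σ)^{L−ℓ} L_loss B_{ΔH} + (B_M B_{ΔW} + L_σ B_J B_{ΔZ} B_W) Σ_{i=0}^{L−ℓ−1} B_P^{i+1} B_W^i C_σ^i for all ℓ ∈ {1,…,L}. Then for every t ≥ 1 and every ℓ ∈ {1,…,L}: ‖J̃^(t,ℓ) − J̃^(t-1,ℓ)‖_F ≤ (B_P B_W C_σ)^{L−ℓ} L_loss B_{ΔH} + (B_M B_{ΔW} + L_σ B_J B_{ΔZ} B_W) Σ_{i=0}^{L−ℓ−1} B_P^{i+1} B_W^i C_σ^i. -/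
open Matrix

attribute [local instance] Matrix.frobeniusNormedAddCommGroup

private lemma frob_le_of_entrywise {p q : ℕ} {c : ℝ} (hc : 0 ≤ c)
    (A B : Matrix (Fin p) (Fin q) ℝ) (h : ∀ i j, |A i j| ≤ c * |B i j|) :
    ‖A‖ ≤ c * ‖B‖ := by
  rw [Matrix.frobenius_norm_def, Matrix.frobenius_norm_def]
  have hS : (0:ℝ) ≤ ∑ i, ∑ j, ‖B i j‖ ^ (2:ℝ) := by
    refine Finset.sum_nonneg fun i _ => Finset.sum_nonneg fun j _ => ?_
    positivity
  have key : ∑ i, ∑ j, ‖A i j‖ ^ (2:ℝ) ≤ c ^ (2:ℝ) * ∑ i, ∑ j, ‖B i j‖ ^ (2:ℝ) := by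
    rw [Finset.mul_sum]
    refine Finset.sum_le_sum fun i _ => ?_
    rw [Finset.mul_sum]
    refine Finset.sum_le_sum fun j _ => ?_
    rw [Real.rpow_two, Real.rpow_two, Real.rpow_two, ← mul_pow]
    have hij := h i j
    simp only [Real.norm_eq_abs]
    have := abs_nonneg (A i j)
    nlinarith [abs_nonneg (B i j)]
  calc (∑ i, ∑ j, ‖A i j‖ ^ (2:ℝ)) ^ (1/2:ℝ)
      ≤ (c ^ (2:ℝ) * ∑ i, ∑ j, ‖B i j‖ ^ (2:ℝ)) ^ (1/2:ℝ) := by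
        apply Real.rpow_le_rpow (by positivity) key (by norm_num)
    _ = c * (∑ i, ∑ j, ‖B i j‖ ^ (2:ℝ)) ^ (1/2:ℝ) := by
        rw [Real.mul_rpow (by positivity) hS, ← Real.rpow_mul hc]
        norm_num

private lemma frob_hadamard_le {p q : ℕ} (A B : Matrix (Fin p) (Fin q) ℝ) :
    ‖A ⊙ B‖ ≤ ‖A‖ * ‖B‖ := by
  rw [Matrix.frobenius_norm_def, Matrix.frobenius_norm_def, Matrix.frobenius_norm_def]
  have hSA : (0:ℝ) ≤ ∑ i, ∑ j, ‖A i j‖ ^ (2:ℝ) := by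
    refine Finset.sum_nonneg fun i _ => Finset.sum_nonneg fun j _ => ?_; positivity
  have hSB : (0:ℝ) ≤ ∑ i, ∑ j, ‖B i j‖ ^ (2:ℝ) := by
    refine Finset.sum_nonneg fun i _ => Finset.sum_nonneg fun j _ => ?_; positivity
  have key : ∑ i, ∑ j, ‖(A ⊙ B) i j‖ ^ (2:ℝ)
      ≤ (∑ i, ∑ j, ‖A i j‖ ^ (2:ℝ)) * ∑ i, ∑ j, ‖B i j‖ ^ (2:ℝ) := by
    calc ∑ i, ∑ j, ‖(A ⊙ B) i j‖ ^ (2:ℝ)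
        ≤ ∑ i, ∑ j, ‖A i j‖ ^ (2:ℝ) * ∑ k, ∑ l, ‖B k l‖ ^ (2:ℝ) := by
          refine Finset.sum_le_sum fun i _ => Finset.sum_le_sum fun j _ => ?_
          have h1 : ‖(A ⊙ B) i j‖ ^ (2:ℝ) = ‖A i j‖ ^ (2:ℝ) * ‖B i j‖ ^ (2:ℝ) := by
            simp only [Real.rpow_two, Matrix.hadamard_apply, Real.norm_eq_abs, abs_mul, mul_pow]
          rw [h1]
          have h2 : ‖B i j‖ ^ (2:ℝ) ≤ ∑ k, ∑ l, ‖B k l‖ ^ (2:ℝ) := by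
            calc ‖B i j‖ ^ (2:ℝ) ≤ ∑ l, ‖B i l‖ ^ (2:ℝ) := by
                  exact Finset.single_le_sum (f := fun l => ‖B i l‖ ^ (2:ℝ))
                    (fun l _ => by positivity) (Finset.mem_univ j)
              _ ≤ ∑ k, ∑ l, ‖B k l‖ ^ (2:ℝ) := by
                  exact Finset.single_le_sum (f := fun k => ∑ l, ‖B k l‖ ^ (2:ℝ))
                    (fun k _ => Finset.sum_nonneg fun l _ => by positivity) (Finset.mem_univ i)
          have h3 : (0:ℝ) ≤ ‖A i j‖ ^ (2:ℝ) := by positivity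
          exact mul_le_mul_of_nonneg_left h2 h3
      _ = (∑ i, ∑ j, ‖A i j‖ ^ (2:ℝ)) * ∑ k, ∑ l, ‖B k l‖ ^ (2:ℝ) := by
          simp only [Finset.sum_mul]
  calc (∑ i, ∑ j, ‖(A ⊙ B) i j‖ ^ (2:ℝ)) ^ (1/2:ℝ)
      ≤ ((∑ i, ∑ j, ‖A i j‖ ^ (2:ℝ)) * ∑ i, ∑ j, ‖B i j‖ ^ (2:ℝ)) ^ (1/2:ℝ) := by
        apply Real.rpow_le_rpow (by positivity) key (by norm_num)
    _ = _ := Real.mul_rpow hSA hSB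

private lemma triple_bound {a b c : ℕ} (P : Matrix (Fin a) (Fin a) ℝ)
    (X : Matrix (Fin a) (Fin c) ℝ) (Y : Matrix (Fin b) (Fin c) ℝ) :
    ‖Pᵀ * X * Yᵀ‖ ≤ ‖P‖ * ‖X‖ * ‖Y‖ := by
  calc ‖Pᵀ * X * Yᵀ‖ ≤ ‖Pᵀ * X‖ * ‖Yᵀ‖ := Matrix.frobenius_norm_mul _ _
    _ ≤ ‖Pᵀ‖ * ‖X‖ * ‖Yᵀ‖ :=
        mul_le_mul_of_nonneg_right (Matrix.frobenius_norm_mul _ _) (norm_nonneg _)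
    _ = ‖P‖ * ‖X‖ * ‖Y‖ := by rw [Matrix.frobenius_norm_transpose, Matrix.frobenius_norm_transpose]
private lemma hadamard_diff_bound {p q : ℕ} (τ : ℝ → ℝ) {Cσ Lσ : ℝ}
    (hCσ : 0 ≤ Cσ) (hLσ : 0 ≤ Lσ)
    (hτb : ∀ x : ℝ, |τ x| ≤ Cσ) (hτl : ∀ x y : ℝ, |τ x - τ y| ≤ Lσ * |x - y|)
    (J1 J0 : Matrix (Fin p) (Fin q) ℝ) (Z1 Z0 : Matrix (Fin p) (Fin q) ℝ) :
    ‖J1 ⊙ Z1.map τ - J0 ⊙ Z0.map τ‖ ≤ Cσ * ‖J1 - J0‖ + Lσ * ‖J0‖ * ‖Z1 - Z0‖ := by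
  have hid : J1 ⊙ Z1.map τ - J0 ⊙ Z0.map τ
      = (J1 - J0) ⊙ Z1.map τ + J0 ⊙ (Z1.map τ - Z0.map τ) := by
    ext i j
    simp only [Matrix.sub_apply, Matrix.add_apply, Matrix.hadamard_apply, Matrix.map_apply]
    ring
  rw [hid]
  refine (norm_add_le _ _).trans (add_le_add ?_ ?_)
  · refine frob_le_of_entrywise hCσ _ _ fun i j => ?_
    simp only [Matrix.hadamard_apply, Matrix.map_apply, abs_mul]
    rw [mul_comm Cσ]
    exact mul_le_mul_of_nonneg_left (hτb _) (abs_nonneg _)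
  · calc ‖J0 ⊙ (Z1.map τ - Z0.map τ)‖ ≤ ‖J0‖ * ‖Z1.map τ - Z0.map τ‖ := frob_hadamard_le _ _
      _ ≤ ‖J0‖ * (Lσ * ‖Z1 - Z0‖) := by
          refine mul_le_mul_of_nonneg_left ?_ (norm_nonneg _)
          refine frob_le_of_entrywise hLσ _ _ fun i j => ?_
          simp only [Matrix.sub_apply, Matrix.map_apply]
          exact hτl _ _
      _ = Lσ * ‖J0‖ * ‖Z1 - Z0‖ := by ring

private def bnd (L : ℕ) (BP BW Cσ K Lloss BΔH : ℝ) (ℓ : ℕ) : ℝ :=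
  (BP * BW * Cσ) ^ (L - ℓ) * Lloss * BΔH
    + K * ∑ i ∈ Finset.range (L - ℓ), BP ^ (i + 1) * BW ^ i * Cσ ^ i

private lemma bnd_nonneg {L : ℕ} {BP BW Cσ K Lloss BΔH : ℝ}
    (hBP : 0 ≤ BP) (hBW : 0 ≤ BW) (hCσ : 0 ≤ Cσ) (hK : 0 ≤ K)
    (hLB : 0 ≤ Lloss * BΔH) (ℓ : ℕ) : 0 ≤ bnd L BP BW Cσ K Lloss BΔH ℓ := by
  unfold bnd
  refine add_nonneg ?_ (mul_nonneg hK (Finset.sum_nonneg fun i _ => ?_))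
  · rw [mul_assoc]
    exact mul_nonneg (pow_nonneg (by positivity) _) hLB
  · exact mul_nonneg (mul_nonneg (pow_nonneg hBP _) (pow_nonneg hBW _)) (pow_nonneg hCσ _)

private lemma bnd_last {L : ℕ} {BP BW Cσ K Lloss BΔH : ℝ} :
    bnd L BP BW Cσ K Lloss BΔH L = Lloss * BΔH := by
  simp [bnd, Nat.sub_self]

private lemma bnd_step {L ℓ : ℕ} (hℓ : ℓ < L) {BP BW Cσ K Lloss BΔH : ℝ} :
    BP * BW * Cσ * bnd L BP BW Cσ K Lloss BΔH (ℓ + 1) + BP * K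
      = bnd L BP BW Cσ K Lloss BΔH ℓ := by
  unfold bnd
  have hk : L - ℓ = (L - (ℓ + 1)) + 1 := by omega
  rw [hk, Finset.sum_range_succ']
  have hs : ∑ i ∈ Finset.range (L - (ℓ + 1)), BP ^ (i + 1 + 1) * BW ^ (i + 1) * Cσ ^ (i + 1)
      = BP * BW * Cσ * ∑ i ∈ Finset.range (L - (ℓ + 1)), BP ^ (i + 1) * BW ^ i * Cσ ^ i := by
    rw [Finset.mul_sum]
    exact Finset.sum_congr rfl fun i _ => by ring
  rw [hs]
  ring
/-- Bounded per-iteration change of the PipeGCN backward-propagated feature gradients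
`J̃^(t,ℓ)`; `τ` plays the role of the activation derivative `σ'`, `⊙` is the Hadamard
product, and all norms are Frobenius norms. -/
theorem stmt_9 (L n : ℕ) (hL : 2 ≤ L) (d : ℕ → ℕ)
    (τ : ℝ → ℝ) (Cσ Lσ : ℝ)
    (hτb : ∀ x : ℝ, |τ x| ≤ Cσ)
    (hτl : ∀ x y : ℝ, |τ x - τ y| ≤ Lσ * |x - y|)
    (BP BW BΔW BΔZ BJ BM Lloss BΔH : ℝ)
    (Pin Pbd : Matrix (Fin n) (Fin n) ℝ) (hP : ‖Pin‖ + ‖Pbd‖ ≤ BP)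
    (W : ℕ → (ℓ : ℕ) → Matrix (Fin (d (ℓ - 1))) (Fin (d ℓ)) ℝ)
    (hW : ∀ t ℓ, 1 ≤ ℓ → ℓ ≤ L → ‖W t ℓ‖ ≤ BW)
    (hΔW : ∀ t, 1 ≤ t → ∀ ℓ, 1 ≤ ℓ → ℓ ≤ L → ‖W t ℓ - W (t - 1) ℓ‖ ≤ BΔW)
    (Zt Jt : ℕ → (ℓ : ℕ) → Matrix (Fin n) (Fin (d ℓ)) ℝ)
    (hΔZ : ∀ t, 1 ≤ t → ∀ ℓ, 1 ≤ ℓ → ℓ ≤ L → ‖Zt t ℓ - Zt (t - 1) ℓ‖ ≤ BΔZ)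
    (hrec : ∀ t, 1 ≤ t → ∀ ℓ, 2 ≤ ℓ → ℓ ≤ L →
      Jt t (ℓ - 1) = Pinᵀ * (Jt t ℓ ⊙ (Zt t ℓ).map τ) * (W t ℓ)ᵀ
        + Pbdᵀ * (Jt (t - 1) ℓ ⊙ (Zt (t - 1) ℓ).map τ) * (W (t - 1) ℓ)ᵀ)
    (hJbd : ∀ t, ∀ ℓ, 1 ≤ ℓ → ℓ ≤ L → ‖Jt t ℓ‖ ≤ BJ)
    (hMbd : ∀ t, ∀ ℓ, 1 ≤ ℓ → ℓ ≤ L → ‖Jt t ℓ ⊙ (Zt t ℓ).map τ‖ ≤ BM)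
    (hlast : ∀ t, 1 ≤ t → ‖Jt t L - Jt (t - 1) L‖ ≤ Lloss * BΔH)
    (hbase : ∀ ℓ, 1 ≤ ℓ → ℓ ≤ L →
      ‖Jt 1 ℓ - Jt 0 ℓ‖ ≤ (BP * BW * Cσ) ^ (L - ℓ) * Lloss * BΔH
        + (BM * BΔW + Lσ * BJ * BΔZ * BW) *
            ∑ i ∈ Finset.range (L - ℓ), BP ^ (i + 1) * BW ^ i * Cσ ^ i) :
    ∀ t, 1 ≤ t → ∀ ℓ, 1 ≤ ℓ → ℓ ≤ L →
      ‖Jt t ℓ - Jt (t - 1) ℓ‖ ≤ (BP * BW * Cσ) ^ (L - ℓ) * Lloss * BΔH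
        + (BM * BΔW + Lσ * BJ * BΔZ * BW) *
            ∑ i ∈ Finset.range (L - ℓ), BP ^ (i + 1) * BW ^ i * Cσ ^ i := by
  -- nonnegativity facts
  have hCσ : 0 ≤ Cσ := le_trans (abs_nonneg _) (hτb 0)
  have hLσ : 0 ≤ Lσ := by
    have h := (abs_nonneg (τ 0 - τ 1)).trans (hτl 0 1)
    norm_num at h
    exact h
  have h1L : 1 ≤ L := by omega
  have hBW : 0 ≤ BW := (norm_nonneg _).trans (hW 0 1 le_rfl h1L)
  have hBJ : 0 ≤ BJ := (norm_nonneg _).trans (hJbd 0 1 le_rfl h1L)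
  have hBM : 0 ≤ BM := (norm_nonneg _).trans (hMbd 0 1 le_rfl h1L)
  have hBΔW : 0 ≤ BΔW := (norm_nonneg _).trans (hΔW 1 le_rfl 1 le_rfl h1L)
  have hBΔZ : 0 ≤ BΔZ := (norm_nonneg _).trans (hΔZ 1 le_rfl 1 le_rfl h1L)
  have hBP : 0 ≤ BP := le_trans (by positivity) hP
  have hLB : 0 ≤ Lloss * BΔH := (norm_nonneg _).trans (hlast 1 le_rfl)
  set K : ℝ := BM * BΔW + Lσ * BJ * BΔZ * BW with hKdef
  have hK : 0 ≤ K := by positivity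
  suffices h : ∀ t, 1 ≤ t → ∀ ℓ, 1 ≤ ℓ → ℓ ≤ L →
      ‖Jt t ℓ - Jt (t - 1) ℓ‖ ≤ bnd L BP BW Cσ K Lloss BΔH ℓ by
    intro t ht ℓ h1 h2
    simpa [bnd] using h t ht ℓ h1 h2
  intro t ht
  induction t, ht using Nat.le_induction with
  | base =>
    intro ℓ h1 h2
    simpa [bnd] using hbase ℓ h1 h2
  | succ t ht IH =>
    suffices h : ∀ k ℓ, 1 ≤ ℓ → ℓ ≤ L → L - ℓ = k →
        ‖Jt (t + 1) ℓ - Jt t ℓ‖ ≤ bnd L BP BW Cσ K Lloss BΔH ℓ by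
      intro ℓ h1 h2
      simpa using h (L - ℓ) ℓ h1 h2 rfl
    intro k
    induction k with
    | zero =>
      intro ℓ h1 h2 hk
      have hℓ : ℓ = L := by omega
      subst hℓ
      have := hlast (t + 1) (by omega)
      rw [bnd_last]
      simpa using this
    | succ k IHk =>
      intro ℓ h1 h2 hk
      have hℓL : ℓ + 1 ≤ L := by omega
      have hℓlt : ℓ < L := by omega
      -- recursion equations
      have e1 : Jt (t + 1) ℓ =
          Pinᵀ * (Jt (t + 1) (ℓ + 1) ⊙ (Zt (t + 1) (ℓ + 1)).map τ) * (W (t + 1) (ℓ + 1))ᵀ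
          + Pbdᵀ * (Jt t (ℓ + 1) ⊙ (Zt t (ℓ + 1)).map τ) * (W t (ℓ + 1))ᵀ :=
        hrec (t + 1) (by omega) (ℓ + 1) (by omega) hℓL
      have e2 : Jt t ℓ =
          Pinᵀ * (Jt t (ℓ + 1) ⊙ (Zt t (ℓ + 1)).map τ) * (W t (ℓ + 1))ᵀ
          + Pbdᵀ * (Jt (t - 1) (ℓ + 1) ⊙ (Zt (t - 1) (ℓ + 1)).map τ) * (W (t - 1) (ℓ + 1))ᵀ :=
        hrec t ht (ℓ + 1) (by omega) hℓL
      -- decomposition of the difference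
      have hdecomp : Jt (t + 1) ℓ - Jt t ℓ =
          Pinᵀ * (Jt (t + 1) (ℓ + 1) ⊙ (Zt (t + 1) (ℓ + 1)).map τ
              - Jt t (ℓ + 1) ⊙ (Zt t (ℓ + 1)).map τ) * (W (t + 1) (ℓ + 1))ᵀ
          + Pinᵀ * (Jt t (ℓ + 1) ⊙ (Zt t (ℓ + 1)).map τ)
              * (W (t + 1) (ℓ + 1) - W t (ℓ + 1))ᵀ
          + (Pbdᵀ * (Jt t (ℓ + 1) ⊙ (Zt t (ℓ + 1)).map τ
              - Jt (t - 1) (ℓ + 1) ⊙ (Zt (t - 1) (ℓ + 1)).map τ) * (W t (ℓ + 1))ᵀ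
          + Pbdᵀ * (Jt (t - 1) (ℓ + 1) ⊙ (Zt (t - 1) (ℓ + 1)).map τ)
              * (W t (ℓ + 1) - W (t - 1) (ℓ + 1))ᵀ) := by
        rw [e1, e2]
        simp only [Matrix.sub_mul, Matrix.mul_sub, Matrix.transpose_sub]
        abel
      -- bound on the first hadamard difference
      have hΔJ1 : ‖Jt (t + 1) (ℓ + 1) - Jt t (ℓ + 1)‖ ≤ bnd L BP BW Cσ K Lloss BΔH (ℓ + 1) :=
        IHk (ℓ + 1) (by omega) hℓL (by omega)
      have hΔJ2 : ‖Jt t (ℓ + 1) - Jt (t - 1) (ℓ + 1)‖ ≤ bnd L BP BW Cσ K Lloss BΔH (ℓ + 1) :=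
        IH (ℓ + 1) (by omega) hℓL
      have hΔZ1 : ‖Zt (t + 1) (ℓ + 1) - Zt t (ℓ + 1)‖ ≤ BΔZ := by
        have := hΔZ (t + 1) (by omega) (ℓ + 1) (by omega) hℓL
        simpa using this
      have hΔZ2 : ‖Zt t (ℓ + 1) - Zt (t - 1) (ℓ + 1)‖ ≤ BΔZ :=
        hΔZ t ht (ℓ + 1) (by omega) hℓL
      set b : ℝ := bnd L BP BW Cσ K Lloss BΔH (ℓ + 1) with hbdef
      have hb : 0 ≤ b := bnd_nonneg hBP hBW hCσ hK hLB _
      have hA1 : ‖Jt (t + 1) (ℓ + 1) ⊙ (Zt (t + 1) (ℓ + 1)).map τ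
          - Jt t (ℓ + 1) ⊙ (Zt t (ℓ + 1)).map τ‖ ≤ Cσ * b + Lσ * BJ * BΔZ := by
        refine (hadamard_diff_bound τ hCσ hLσ hτb hτl _ _ _ _).trans ?_
        have hJ := hJbd t (ℓ + 1) (by omega) hℓL
        gcongr
      have hA2 : ‖Jt t (ℓ + 1) ⊙ (Zt t (ℓ + 1)).map τ
          - Jt (t - 1) (ℓ + 1) ⊙ (Zt (t - 1) (ℓ + 1)).map τ‖ ≤ Cσ * b + Lσ * BJ * BΔZ := by
        refine (hadamard_diff_bound τ hCσ hLσ hτb hτl _ _ _ _).trans ?_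
        have hJ := hJbd (t - 1) (ℓ + 1) (by omega) hℓL
        gcongr
      have hM1 : ‖Jt t (ℓ + 1) ⊙ (Zt t (ℓ + 1)).map τ‖ ≤ BM := hMbd t (ℓ + 1) (by omega) hℓL
      have hM2 : ‖Jt (t - 1) (ℓ + 1) ⊙ (Zt (t - 1) (ℓ + 1)).map τ‖ ≤ BM :=
        hMbd (t - 1) (ℓ + 1) (by omega) hℓL
      have hW1 : ‖W (t + 1) (ℓ + 1)‖ ≤ BW := hW (t + 1) (ℓ + 1) (by omega) hℓL
      have hW2 : ‖W t (ℓ + 1)‖ ≤ BW := hW t (ℓ + 1) (by omega) hℓL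
      have hΔW1 : ‖W (t + 1) (ℓ + 1) - W t (ℓ + 1)‖ ≤ BΔW := by
        have := hΔW (t + 1) (by omega) (ℓ + 1) (by omega) hℓL
        simpa using this
      have hΔW2 : ‖W t (ℓ + 1) - W (t - 1) (ℓ + 1)‖ ≤ BΔW :=
        hΔW t ht (ℓ + 1) (by omega) hℓL
      have hc : 0 ≤ (Cσ * b + Lσ * BJ * BΔZ) * BW + BM * BΔW := by positivity
      calc ‖Jt (t + 1) ℓ - Jt t ℓ‖
          ≤ ‖Pin‖ * ‖Jt (t + 1) (ℓ + 1) ⊙ (Zt (t + 1) (ℓ + 1)).map τ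
                - Jt t (ℓ + 1) ⊙ (Zt t (ℓ + 1)).map τ‖ * ‖W (t + 1) (ℓ + 1)‖
            + ‖Pin‖ * ‖Jt t (ℓ + 1) ⊙ (Zt t (ℓ + 1)).map τ‖
                * ‖W (t + 1) (ℓ + 1) - W t (ℓ + 1)‖
            + (‖Pbd‖ * ‖Jt t (ℓ + 1) ⊙ (Zt t (ℓ + 1)).map τ
                - Jt (t - 1) (ℓ + 1) ⊙ (Zt (t - 1) (ℓ + 1)).map τ‖ * ‖W t (ℓ + 1)‖
            + ‖Pbd‖ * ‖Jt (t - 1) (ℓ + 1) ⊙ (Zt (t - 1) (ℓ + 1)).map τ‖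
                * ‖W t (ℓ + 1) - W (t - 1) (ℓ + 1)‖) := by
            rw [hdecomp]
            refine (norm_add_le _ _).trans (add_le_add ?_ ?_)
            · exact (norm_add_le _ _).trans (add_le_add (triple_bound _ _ _) (triple_bound _ _ _))
            · exact (norm_add_le _ _).trans (add_le_add (triple_bound _ _ _) (triple_bound _ _ _))
        _ ≤ ‖Pin‖ * (Cσ * b + Lσ * BJ * BΔZ) * BW + ‖Pin‖ * BM * BΔW
            + (‖Pbd‖ * (Cσ * b + Lσ * BJ * BΔZ) * BW + ‖Pbd‖ * BM * BΔW) := by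
            gcongr
        _ = (‖Pin‖ + ‖Pbd‖) * ((Cσ * b + Lσ * BJ * BΔZ) * BW + BM * BΔW) := by ring
        _ ≤ BP * ((Cσ * b + Lσ * BJ * BΔZ) * BW + BM * BΔW) :=
            mul_le_mul_of_nonneg_right hP hc
        _ = BP * BW * Cσ * b + BP * K := by rw [hKdef]; ring
        _ = bnd L BP BW Cσ K Lloss BΔH ℓ := bnd_step hℓlt
end

section
/- Let τ : ℝ → ℝ satisfy |τ(x)| ≤ C_σ and |τ(x) − τ(y)| ≤ L_σ |x − y| for all x, y. Let J̃, J, Z̃, Z ∈ ℝ^{m×k} with ‖J̃‖_F ≤ B_J, ‖Z̃ − Z‖_F ≤ E_Z, and ‖J̃ − J‖_F ≤ E_J. Then ‖J̃ ∘ τ(Z̃) − J ∘ τ(Z)‖_F ≤ C_σ E_J + L_σ B_J E_Z. -/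
open Matrix

attribute [local instance] Matrix.frobeniusNormedAddCommGroup

private lemma fnorm_sqrt {m k : ℕ} (A : Matrix (Fin m) (Fin k) ℝ) :
    ‖A‖ = Real.sqrt (∑ i, ∑ j, (A i j) ^ 2) := by
  rw [Matrix.frobenius_norm_def, Real.sqrt_eq_rpow]
  congr 1
  refine Finset.sum_congr rfl fun i _ => Finset.sum_congr rfl fun j _ => ?_
  rw [Real.norm_eq_abs, Real.rpow_two, sq_abs, sq]

private lemma fnorm_le_of_entry {m k : ℕ} (M N : Matrix (Fin m) (Fin k) ℝ) (c : ℝ)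
    (hc : 0 ≤ c) (h : ∀ i j, |M i j| ≤ c * |N i j|) : ‖M‖ ≤ c * ‖N‖ := by
  rw [fnorm_sqrt, fnorm_sqrt, ← Real.sqrt_sq hc, ← Real.sqrt_mul (sq_nonneg c),
    Finset.mul_sum]
  apply Real.sqrt_le_sqrt
  refine Finset.sum_le_sum fun i _ => ?_
  rw [Finset.mul_sum]
  refine Finset.sum_le_sum fun j _ => ?_
  calc M i j ^ 2 = |M i j| ^ 2 := (sq_abs _).symm
    _ ≤ (c * |N i j|) ^ 2 := by
        exact pow_le_pow_left₀ (abs_nonneg _) (h i j) 2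
    _ = c ^ 2 * N i j ^ 2 := by rw [mul_pow, sq_abs]

private lemma fnorm_hadamard {m k : ℕ} (A B : Matrix (Fin m) (Fin k) ℝ) :
    ‖A ⊙ B‖ ≤ ‖A‖ * ‖B‖ := by
  rw [fnorm_sqrt, fnorm_sqrt, fnorm_sqrt, ← Real.sqrt_mul (by positivity)]
  apply Real.sqrt_le_sqrt
  have hB : ∀ i j, (B i j) ^ 2 ≤ ∑ i', ∑ j', (B i' j') ^ 2 := by
    intro i j
    calc (B i j) ^ 2 ≤ ∑ j', (B i j') ^ 2 :=
          Finset.single_le_sum (f := fun j' => (B i j') ^ 2) (fun j' _ => sq_nonneg _)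
            (Finset.mem_univ j)
      _ ≤ ∑ i', ∑ j', (B i' j') ^ 2 :=
          Finset.single_le_sum (f := fun i' => ∑ j', (B i' j') ^ 2)
            (fun i' _ => Finset.sum_nonneg fun j' _ => sq_nonneg _)
            (Finset.mem_univ i)
  rw [Finset.sum_mul]
  refine Finset.sum_le_sum fun i _ => ?_
  rw [Finset.sum_mul]
  refine Finset.sum_le_sum fun j _ => ?_
  have : (A ⊙ B) i j ^ 2 = A i j ^ 2 * B i j ^ 2 := by
    simp [Matrix.hadamard_apply, mul_pow]
  rw [this]
  exact mul_le_mul_of_nonneg_left (hB i j) (sq_nonneg _)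

/-- Error bound `E_M = C_σ E_J + L_σ B_J E_Z` between the stale intermediate matrix
`J̃ ∘ τ(Z̃)` and the exact `J ∘ τ(Z)` (Hadamard product, entrywise `τ`), in Frobenius
norm. -/
theorem stmt_13 (m k : ℕ) (τ : ℝ → ℝ) (Cσ Lσ BJ EZ EJ : ℝ)
    (hτb : ∀ x : ℝ, |τ x| ≤ Cσ)
    (hτl : ∀ x y : ℝ, |τ x - τ y| ≤ Lσ * |x - y|)
    (Jt J Zt Z : Matrix (Fin m) (Fin k) ℝ)
    (hJt : ‖Jt‖ ≤ BJ) (hEZ : ‖Zt - Z‖ ≤ EZ) (hEJ : ‖Jt - J‖ ≤ EJ) :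
    ‖Jt ⊙ Zt.map τ - J ⊙ Z.map τ‖ ≤ Cσ * EJ + Lσ * BJ * EZ := by
  have hC : 0 ≤ Cσ := le_trans (abs_nonneg _) (hτb 0)
  have hL : 0 ≤ Lσ := by
    have h := hτl 0 1
    simp at h
    linarith [abs_nonneg (τ 0 - τ 1)]
  have hBJ : 0 ≤ BJ := le_trans (norm_nonneg _) hJt
  have hEZ0 : 0 ≤ EZ := le_trans (norm_nonneg _) hEZ
  have split : Jt ⊙ Zt.map τ - J ⊙ Z.map τ =
      (Jt - J) ⊙ Z.map τ + Jt ⊙ (Zt.map τ - Z.map τ) := by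
    ext i j
    simp [Matrix.hadamard_apply, Matrix.sub_apply, Matrix.add_apply, Matrix.map_apply]
    ring
  rw [split]
  calc ‖(Jt - J) ⊙ Z.map τ + Jt ⊙ (Zt.map τ - Z.map τ)‖
      ≤ ‖(Jt - J) ⊙ Z.map τ‖ + ‖Jt ⊙ (Zt.map τ - Z.map τ)‖ := norm_add_le _ _
    _ ≤ Cσ * EJ + Lσ * BJ * EZ := by
        gcongr ?_ + ?_
        · have h1 : ‖(Jt - J) ⊙ Z.map τ‖ ≤ Cσ * ‖Jt - J‖ := by
            rw [show (Jt - J) ⊙ Z.map τ = Z.map τ ⊙ (Jt - J) from Matrix.hadamard_comm _ _]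
            refine fnorm_le_of_entry _ _ Cσ hC fun i j => ?_
            rw [Matrix.hadamard_apply, abs_mul]
            exact mul_le_mul_of_nonneg_right (hτb _) (abs_nonneg _)
          calc ‖(Jt - J) ⊙ Z.map τ‖ ≤ Cσ * ‖Jt - J‖ := h1
            _ ≤ Cσ * EJ := mul_le_mul_of_nonneg_left hEJ hC
        · have h2 : ‖Zt.map τ - Z.map τ‖ ≤ Lσ * ‖Zt - Z‖ := by
            refine fnorm_le_of_entry _ _ Lσ hL fun i j => ?_
            simpa [Matrix.sub_apply, Matrix.map_apply] using hτl (Zt i j) (Z i j)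
          calc ‖Jt ⊙ (Zt.map τ - Z.map τ)‖ ≤ ‖Jt‖ * ‖Zt.map τ - Z.map τ‖ :=
                fnorm_hadamard _ _
            _ ≤ BJ * (Lσ * ‖Zt - Z‖) := by
                apply mul_le_mul hJt h2 (norm_nonneg _) hBJ
            _ ≤ BJ * (Lσ * EZ) := by
                apply mul_le_mul_of_nonneg_left _ hBJ
                exact mul_le_mul_of_nonneg_left hEZ hL
            _ = Lσ * BJ * EZ := by ring
end
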